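/- Let n ≥ 1, let μ : ℝⁿ → ℝ be a smooth function with μ(x) > 0 for all x, let w : ℝⁿ → ℝⁿ be a smooth vector field, and let f : ℝⁿ → ℝ be a smooth function. Define u := μ^{−1/2}·w + μ^{−1}·∇f − f·∇(μ^{−1}), the pressure p := div(μ^{1/2}·w) + 2·Δf, and the stress tensor σ_{jk} := μ·(∂uₖ/∂xⱼ + ∂uⱼ/∂xₖ) − p·δ_{jk}. Then for each j = 1, …, n, at every point of ℝⁿ: Σₖ ∂σ_{jk}/∂xₖ = μ^{1/2}·Δwⱼ − 2·(∂(μ^{1/2})/∂xⱼ)·div w − 2·Σₖ ∂/∂xₖ( μ·∂²(μ^{−1})/∂xⱼ∂xₖ )·f − 2·μ·Σₖ (∂²(μ^{−1})/∂xⱼ∂xₖ)·(∂f/∂xₖ) − 2·Σₖ (∂²(μ^{1/2})/∂xₖ∂xⱼ)·wₖ − Δ(μ^{1/2})·wⱼ. -/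

import Mathlib

namespace StokesEuclid

variable {n : ℕ}

/-- The partial derivative `∂φ/∂xⱼ` of a scalar function `φ : ℝⁿ → ℝ`. -/
noncomputable def pd (j : Fin n) (φ : (Fin n → ℝ) → ℝ) : (Fin n → ℝ) → ℝ :=
  fun x => fderiv ℝ φ x (Pi.single j 1)

/-- The divergence `div v = Σⱼ ∂vⱼ/∂xⱼ` of a vector field `v : ℝⁿ → ℝⁿ`. -/
noncomputable def diverg (v : (Fin n → ℝ) → (Fin n → ℝ)) : (Fin n → ℝ) → ℝ :=
  fun x => ∑ j, pd j (fun y => v y j) x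

/-- The gradient `∇φ` of a scalar function `φ : ℝⁿ → ℝ`. -/
noncomputable def grad (φ : (Fin n → ℝ) → ℝ) : (Fin n → ℝ) → (Fin n → ℝ) :=
  fun x j => pd j φ x

/-- The Laplacian `Δφ = Σⱼ ∂²φ/∂xⱼ²` of a scalar function `φ : ℝⁿ → ℝ`. -/
noncomputable def lap (φ : (Fin n → ℝ) → ℝ) : (Fin n → ℝ) → ℝ :=
  fun x => ∑ j, pd j (pd j φ) x


variable {n : ℕ} {φ ψ : (Fin n → ℝ) → ℝ} {x : Fin n → ℝ} {j k : Fin n}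

lemma pd_add (hφ : DifferentiableAt ℝ φ x) (hψ : DifferentiableAt ℝ ψ x) :
    pd j (fun y => φ y + ψ y) x = pd j φ x + pd j ψ x := by
  simp [pd, fderiv_fun_add hφ hψ]

lemma pd_sub (hφ : DifferentiableAt ℝ φ x) (hψ : DifferentiableAt ℝ ψ x) :
    pd j (fun y => φ y - ψ y) x = pd j φ x - pd j ψ x := by
  simp [pd, fderiv_fun_sub hφ hψ]

lemma pd_mul (hφ : DifferentiableAt ℝ φ x) (hψ : DifferentiableAt ℝ ψ x) :
    pd j (fun y => φ y * ψ y) x = φ x * pd j ψ x + ψ x * pd j φ x := by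
  simp [pd, fderiv_fun_mul hφ hψ]

lemma pd_const_mul (hφ : DifferentiableAt ℝ φ x) (c : ℝ) :
    pd j (fun y => c * φ y) x = c * pd j φ x := by
  simp [pd, fderiv_const_mul hφ c]

lemma pd_sum {ι : Type*} {s : Finset ι} {A : ι → (Fin n → ℝ) → ℝ}
    (h : ∀ i ∈ s, DifferentiableAt ℝ (A i) x) :
    pd j (fun y => ∑ i ∈ s, A i y) x = ∑ i ∈ s, pd j (A i) x := by
  simp [pd, fderiv_fun_sum h]

lemma pd_inv (hφ : DifferentiableAt ℝ φ x) (h0 : φ x ≠ 0) :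
    pd j (fun y => (φ y)⁻¹) x = -((φ x)^2)⁻¹ * pd j φ x := by
  have h := fderiv_comp (g := fun t : ℝ => t⁻¹) x (differentiableAt_inv h0) hφ
  simp only [pd]
  rw [show (fun y => (φ y)⁻¹) = (fun t : ℝ => t⁻¹) ∘ φ from rfl, h, fderiv_inv]
  simp [mul_comm]

lemma contDiffAt_pd (hφ : ContDiffAt ℝ (⊤ : ℕ∞) φ x) : ContDiffAt ℝ (⊤ : ℕ∞) (pd j φ) x := by
  have h1 : ContDiffAt ℝ (⊤ : ℕ∞) (fderiv ℝ φ) x := hφ.fderiv_right (by simp)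
  exact h1.clm_apply contDiffAt_const

lemma pd_comm (hφ : ContDiffAt ℝ (⊤ : ℕ∞) φ x) :
    pd j (pd k φ) x = pd k (pd j φ) x := by
  have hd : DifferentiableAt ℝ (fderiv ℝ φ) x :=
    (hφ.fderiv_right (m := (⊤ : ℕ∞)) (n := (⊤ : ℕ∞)) (by simp)).differentiableAt (by simp)
  have hsym := hφ.isSymmSndFDerivAt (by rw [minSmoothness_of_isRCLikeNormedField]; exact WithTop.coe_le_coe.2 (le_top : (2 : ℕ∞) ≤ ⊤))
  have e : ∀ (a b : Fin n), pd a (pd b φ) x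
      = fderiv ℝ (fderiv ℝ φ) x (Pi.single a 1) (Pi.single b 1) := by
    intro a b
    have hb : pd b φ = fun y => (fderiv ℝ φ y) (Pi.single b 1) := rfl
    rw [pd, hb, fderiv_clm_apply hd (differentiableAt_const _)]
    simp
  rw [e, e, hsym]

lemma pd_const (c : ℝ) : pd j (fun _ : Fin n → ℝ => c) x = 0 := by
  simp [pd]

/-- Everywhere-smooth scalar functions. -/
def Sm (φ : (Fin n → ℝ) → ℝ) : Prop := ∀ y, ContDiffAt ℝ (⊤ : ℕ∞) φ y

lemma Sm.diffAt {φ : (Fin n → ℝ) → ℝ} (h : Sm φ) (y : Fin n → ℝ) :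
    DifferentiableAt ℝ φ y := (h y).differentiableAt (by simp)

lemma Sm.mul {φ ψ : (Fin n → ℝ) → ℝ} (hφ : Sm φ) (hψ : Sm ψ) :
    Sm fun y => φ y * ψ y := fun y => (hφ y).mul (hψ y)

lemma Sm.add {φ ψ : (Fin n → ℝ) → ℝ} (hφ : Sm φ) (hψ : Sm ψ) :
    Sm fun y => φ y + ψ y := fun y => (hφ y).add (hψ y)

lemma Sm.sub {φ ψ : (Fin n → ℝ) → ℝ} (hφ : Sm φ) (hψ : Sm ψ) :
    Sm fun y => φ y - ψ y := fun y => (hφ y).sub (hψ y)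

lemma Sm.const_mul {φ : (Fin n → ℝ) → ℝ} (hφ : Sm φ) (c : ℝ) :
    Sm fun y => c * φ y := fun y => contDiffAt_const.mul (hφ y)

lemma Sm.inv {φ : (Fin n → ℝ) → ℝ} (hφ : Sm φ) (h0 : ∀ y, φ y ≠ 0) :
    Sm fun y => (φ y)⁻¹ := fun y => (hφ y).inv (h0 y)

lemma Sm.pd' {φ : (Fin n → ℝ) → ℝ} (hφ : Sm φ) (j : Fin n) :
    Sm (pd j φ) := fun y => contDiffAt_pd (hφ y)

lemma Sm.sum {ι : Type*} {s : Finset ι} {A : ι → (Fin n → ℝ) → ℝ}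
    (h : ∀ i ∈ s, Sm (A i)) : Sm fun y => ∑ i ∈ s, A i y :=
  fun y => ContDiffAt.sum fun i hi => h i hi y


lemma key {n : ℕ} (μ S : (Fin n → ℝ) → ℝ) (w : (Fin n → ℝ) → Fin n → ℝ)
    (f : (Fin n → ℝ) → ℝ) (hμ : Sm μ) (hμ0 : ∀ y, μ y ≠ 0) (hS : Sm S)
    (hS0 : ∀ y, S y ≠ 0) (hSS : ∀ y, S y * S y = μ y)
    (hw : ∀ k, Sm fun y => w y k) (hf : Sm f) (x : Fin n → ℝ) (j : Fin n) :
    ∑ k, pd k (fun z =>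
        μ z * (pd j (fun y => (S y)⁻¹ * w y k + (μ y)⁻¹ * pd k f y
              - f y * pd k (fun v => (μ v)⁻¹) y) z
          + pd k (fun y => (S y)⁻¹ * w y j + (μ y)⁻¹ * pd j f y
              - f y * pd j (fun v => (μ v)⁻¹) y) z)
        - (∑ m, pd m (fun y => S y * w y m) z + 2 * ∑ m, pd m (pd m f) z)
          * if j = k then 1 else 0) x
    = S x * ∑ k, pd k (pd k fun y => w y j) x
      - 2 * pd j S x * ∑ k, pd k (fun y => w y k) x
      - (2 * ∑ k, pd k (fun y => μ y * pd j (pd k fun v => (μ v)⁻¹) y) x) * f x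
      - 2 * μ x * ∑ k, pd j (pd k fun v => (μ v)⁻¹) x * pd k f x
      - 2 * ∑ k, pd k (pd j S) x * w x k
      - (∑ k, pd k (pd k S) x) * w x j := by
  have hν : Sm fun v => (μ v)⁻¹ := hμ.inv hμ0
  have hT : Sm fun y => (S y)⁻¹ := hS.inv hS0
  have hpdf : ∀ a : Fin n, Sm (pd a f) := fun a => hf.pd' a
  have hpdν : ∀ a : Fin n, Sm (pd a fun v => (μ v)⁻¹) := fun a => hν.pd' a
  have hM : ∀ a : Fin n, Sm fun z => μ z * pd j (pd a fun v => (μ v)⁻¹) z :=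
    fun a => hμ.mul ((hpdν a).pd' j)
  have SmP : Sm fun z => (∑ m, pd m (fun y => S y * w y m) z)
      + 2 * ∑ m, pd m (pd m f) z :=
    (Sm.sum fun m _ => (hS.mul (hw m)).pd' m).add
      ((Sm.sum fun m _ => (hf.pd' m).pd' m).const_mul 2)
  -- first-order expansion of the components of u
  have hu1 : ∀ (a b : Fin n) (y : Fin n → ℝ),
      pd a (fun y => (S y)⁻¹ * w y b + (μ y)⁻¹ * pd b f y
        - f y * pd b (fun v => (μ v)⁻¹) y) y
      = -((S y)^2)⁻¹ * pd a S y * w y b + (S y)⁻¹ * pd a (fun z => w z b) y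
        + pd a (fun v => (μ v)⁻¹) y * pd b f y + (μ y)⁻¹ * pd a (pd b f) y
        - pd a f y * pd b (fun v => (μ v)⁻¹) y
        - f y * pd a (pd b fun v => (μ v)⁻¹) y := by
    intro a b y
    rw [pd_sub (((hT.mul (hw b)).add (hν.mul (hpdf b))).diffAt y)
          ((hf.mul (hpdν b)).diffAt y),
        pd_add ((hT.mul (hw b)).diffAt y) ((hν.mul (hpdf b)).diffAt y),
        pd_mul (hT.diffAt y) ((hw b).diffAt y),
        pd_mul (hν.diffAt y) ((hpdf b).diffAt y),
        pd_mul (hf.diffAt y) ((hpdν b).diffAt y),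
        pd_inv (hS.diffAt y) (hS0 y)]
    ring
  -- per-k expansion
  have hstep : ∀ k : Fin n,
      pd k (fun z =>
        μ z * (pd j (fun y => (S y)⁻¹ * w y k + (μ y)⁻¹ * pd k f y
              - f y * pd k (fun v => (μ v)⁻¹) y) z
          + pd k (fun y => (S y)⁻¹ * w y j + (μ y)⁻¹ * pd j f y
              - f y * pd j (fun v => (μ v)⁻¹) y) z)
        - (∑ m, pd m (fun y => S y * w y m) z + 2 * ∑ m, pd m (pd m f) z)
          * if j = k then 1 else 0) x
      = (S x * pd k (pd k fun y => w y j) x + pd k (fun y => w y j) x * pd k S x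
          - (pd k S x * pd k (fun y => w y j) x + w x j * pd k (pd k S) x)
          + (S x * pd k (pd j fun y => w y k) x + pd j (fun y => w y k) x * pd k S x)
          - (pd j S x * pd k (fun y => w y k) x + w x k * pd k (pd j S) x)
          + 2 * pd k (pd j (pd k f)) x
          - 2 * ((μ x * pd j (pd k fun v => (μ v)⁻¹) x) * pd k f x
              + f x * pd k (fun z => μ z * pd j (pd k fun v => (μ v)⁻¹) z) x))
        - (if j = k then 1 else 0)
            * pd k (fun z => (∑ m, pd m (fun y => S y * w y m) z)
                + 2 * ∑ m, pd m (pd m f) z) x := by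
    intro k
    have e1 : (fun z =>
        μ z * (pd j (fun y => (S y)⁻¹ * w y k + (μ y)⁻¹ * pd k f y
              - f y * pd k (fun v => (μ v)⁻¹) y) z
          + pd k (fun y => (S y)⁻¹ * w y j + (μ y)⁻¹ * pd j f y
              - f y * pd j (fun v => (μ v)⁻¹) y) z)
        - (∑ m, pd m (fun y => S y * w y m) z + 2 * ∑ m, pd m (pd m f) z)
          * if j = k then 1 else 0)
        = fun z =>
          (S z * pd k (fun y => w y j) z - pd k S z * w z j
            + S z * pd j (fun y => w y k) z - pd j S z * w z k
            + 2 * pd j (pd k f) z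
            - 2 * ((μ z * pd j (pd k fun v => (μ v)⁻¹) z) * f z))
          - ((∑ m, pd m (fun y => S y * w y m) z) + 2 * ∑ m, pd m (pd m f) z)
              * if j = k then 1 else 0 := by
      funext z
      have P1 : μ z * (S z)⁻¹ = S z := by
        rw [← hSS z]; exact mul_inv_cancel_right₀ (hS0 z) (S z)
      have P2 : μ z * ((S z)^2)⁻¹ = 1 := by
        rw [← hSS z, sq]; exact mul_inv_cancel₀ (mul_ne_zero (hS0 z) (hS0 z))
      have P3 : μ z * (μ z)⁻¹ = 1 := mul_inv_cancel₀ (hμ0 z)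
      rw [hu1 j k z, hu1 k j z, pd_comm (j := k) (k := j) (hf z),
          pd_comm (j := k) (k := j) (hν z)]
      linear_combination (pd j (fun z' => w z' k) z + pd k (fun z' => w z' j) z) * P1
        + (-(pd j S z * w z k) - pd k S z * w z j) * P2
        + 2 * pd j (pd k f) z * P3
    rw [e1,
        pd_sub ((((((hS.mul ((hw j).pd' k)).sub ((hS.pd' k).mul (hw j))).add
            (hS.mul ((hw k).pd' j))).sub ((hS.pd' j).mul (hw k))).add
            (((hf.pd' k).pd' j).const_mul 2)).sub (((hM k).mul hf).const_mul 2) |>.diffAt x)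
          ((SmP.mul (fun y => contDiffAt_const)).diffAt x),
        pd_sub (((((hS.mul ((hw j).pd' k)).sub ((hS.pd' k).mul (hw j))).add
            (hS.mul ((hw k).pd' j))).sub ((hS.pd' j).mul (hw k))).add
            (((hf.pd' k).pd' j).const_mul 2) |>.diffAt x)
          ((((hM k).mul hf).const_mul 2).diffAt x),
        pd_add ((((hS.mul ((hw j).pd' k)).sub ((hS.pd' k).mul (hw j))).add
            (hS.mul ((hw k).pd' j))).sub ((hS.pd' j).mul (hw k)) |>.diffAt x)
          ((((hf.pd' k).pd' j).const_mul 2).diffAt x),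
        pd_sub (((hS.mul ((hw j).pd' k)).sub ((hS.pd' k).mul (hw j))).add
            (hS.mul ((hw k).pd' j)) |>.diffAt x)
          (((hS.pd' j).mul (hw k)).diffAt x),
        pd_add ((hS.mul ((hw j).pd' k)).sub ((hS.pd' k).mul (hw j)) |>.diffAt x)
          ((hS.mul ((hw k).pd' j)).diffAt x),
        pd_sub ((hS.mul ((hw j).pd' k)).diffAt x) (((hS.pd' k).mul (hw j)).diffAt x),
        pd_mul (hS.diffAt x) (((hw j).pd' k).diffAt x),
        pd_mul ((hS.pd' k).diffAt x) ((hw j).diffAt x),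
        pd_mul (hS.diffAt x) (((hw k).pd' j).diffAt x),
        pd_mul ((hS.pd' j).diffAt x) ((hw k).diffAt x),
        pd_const_mul (((hf.pd' k).pd' j).diffAt x) 2,
        pd_const_mul (((hM k).mul hf).diffAt x) 2,
        pd_mul ((hM k).diffAt x) (hf.diffAt x),
        pd_mul (SmP.diffAt x) (differentiableAt_const _),
        pd_const]
    ring
  -- expansion of the pressure derivative
  have hPj : pd j (fun z => (∑ m, pd m (fun y => S y * w y m) z)
        + 2 * ∑ m, pd m (pd m f) z) x
      = (∑ m, (S x * pd m (pd j fun y => w y m) x + pd m (fun y => w y m) x * pd j S x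
          + w x m * pd j (pd m S) x + pd m S x * pd j (fun y => w y m) x))
        + 2 * ∑ m, pd j (pd m (pd m f)) x := by
    rw [pd_add ((Sm.sum fun m _ => (hS.mul (hw m)).pd' m).diffAt x)
          (((Sm.sum fun m _ => (hf.pd' m).pd' m).const_mul 2).diffAt x),
        pd_sum (fun m _ => ((hS.mul (hw m)).pd' m).diffAt x),
        pd_const_mul ((Sm.sum fun m _ => (hf.pd' m).pd' m).diffAt x) 2,
        pd_sum (fun m _ => ((hf.pd' m).pd' m).diffAt x)]
    congr 1
    refine Finset.sum_congr rfl fun m _ => ?_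
    have e : pd m (fun y => S y * w y m)
        = fun y => S y * pd m (fun z => w z m) y + w y m * pd m S y :=
      funext fun y => pd_mul (hS.diffAt y) ((hw m).diffAt y)
    rw [e, pd_add ((hS.mul ((hw m).pd' m)).diffAt x) (((hw m).mul (hS.pd' m)).diffAt x),
        pd_mul (hS.diffAt x) (((hw m).pd' m).diffAt x),
        pd_mul ((hw m).diffAt x) ((hS.pd' m).diffAt x),
        pd_comm (j := j) (k := m) ((hw m) x)]
    ring
  rw [Finset.sum_congr rfl fun k _ => hstep k, Finset.sum_sub_distrib]
  simp only [ite_mul, one_mul, zero_mul, Finset.sum_ite_eq, Finset.mem_univ, if_true]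
  rw [hPj]
  simp only [Finset.mul_sum, Finset.sum_mul, ← Finset.sum_add_distrib, ← Finset.sum_sub_distrib]
  refine Finset.sum_congr rfl fun k _ => ?_
  rw [pd_comm (j := j) (k := k) (hS x),
      pd_comm (j := j) (k := k) (contDiffAt_pd (hf x))]
  ring


end StokesEuclid

open StokesEuclid

/-- The Euclidean stress-divergence identity: with
`u = μ^{−1/2} w + μ^{−1} ∇f − f ∇(μ^{−1})`, `p = div(μ^{1/2} w) + 2Δf`, and
`σ_{jk} = μ(∂uₖ/∂xⱼ + ∂uⱼ/∂xₖ) − p δ_{jk}`, one has for each `j`: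
`Σₖ ∂σ_{jk}/∂xₖ = μ^{1/2} Δwⱼ − 2 ∂ⱼ(μ^{1/2}) div w − 2 Σₖ ∂ₖ(μ ∂ⱼ∂ₖ(μ⁻¹)) f
  − 2 μ Σₖ ∂ⱼ∂ₖ(μ⁻¹) ∂ₖf − 2 Σₖ ∂ₖ∂ⱼ(μ^{1/2}) wₖ − Δ(μ^{1/2}) wⱼ`. -/
theorem div_stress_of_stokes_substitution (n : ℕ) (hn : 1 ≤ n)
    (μ : (Fin n → ℝ) → ℝ) (hμ : ContDiff ℝ (⊤ : ℕ∞) μ) (hμpos : ∀ x, 0 < μ x)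
    (w : (Fin n → ℝ) → (Fin n → ℝ)) (hw : ContDiff ℝ (⊤ : ℕ∞) w)
    (f : (Fin n → ℝ) → ℝ) (hf : ContDiff ℝ (⊤ : ℕ∞) f)
    (u : (Fin n → ℝ) → (Fin n → ℝ))
    (hu : u = fun x j => (Real.sqrt (μ x))⁻¹ * w x j + (μ x)⁻¹ * grad f x j
      - f x * grad (fun y => (μ y)⁻¹) x j)
    (p : (Fin n → ℝ) → ℝ)
    (hp : p = fun x => diverg (fun y k => Real.sqrt (μ y) * w y k) x + 2 * lap f x)
    (σ : Fin n → Fin n → (Fin n → ℝ) → ℝ)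
    (hσ : σ = fun j k x => μ x * (pd j (fun y => u y k) x + pd k (fun y => u y j) x)
      - p x * (if j = k then 1 else 0)) :
    ∀ x, ∀ j,
      ∑ k, pd k (σ j k) x
        = Real.sqrt (μ x) * lap (fun y => w y j) x
          - 2 * pd j (fun y => Real.sqrt (μ y)) x * diverg w x
          - 2 * (∑ k, pd k (fun y => μ y * pd j (pd k (fun z => (μ z)⁻¹)) y) x) * f x
          - 2 * μ x * ∑ k, pd j (pd k (fun z => (μ z)⁻¹)) x * pd k f x
          - 2 * ∑ k, pd k (pd j (fun y => Real.sqrt (μ y))) x * w x k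
          - lap (fun y => Real.sqrt (μ y)) x * w x j := by
  subst hu hp hσ
  intro x j
  simp only [diverg, lap, grad]
  exact key μ (fun y => Real.sqrt (μ y)) w f (fun y => hμ.contDiffAt)
    (fun y => (hμpos y).ne')
    (fun y => (Real.contDiffAt_sqrt (hμpos y).ne').comp y hμ.contDiffAt)
    (fun y => (Real.sqrt_pos.2 (hμpos y)).ne')
    (fun y => Real.mul_self_sqrt (hμpos y).le)
    (fun k y => (contDiff_pi.1 hw k).contDiffAt)
    (fun y => hf.contDiffAt) x j
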